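/- For every p ∈ ℂ with p ≠ 1/2 and every ω ∈ ℂ, I_p(ω/2) · I_{p/(2p−1)}(ω/2) = I_{p²/(2p−1)}(ω). -/

import Mathlib

/-!
With `q = p/(2p-1)` and `r = p²/(2p-1)` one has the polynomial identity
`(p + (1-p)x)(q + (1-q)x) = r + (1-r)x²`. Taking `x = e^{ω/2^{n+1}}` it matches the `n`-th factors
of the left side with the `n`-th factor of `I_r(ω)`; since all three products converge, the
product of the two products is the product of the termwise products.
-/

/-- For `p, ω ∈ ℂ`, the entire function
`I_p(ω) = ∏_{n=1}^∞ (p + (1-p) e^{ω/2^n})` (index `n : ℕ` stands for `n+1 ≥ 1`). -/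
noncomputable def Iprod (p ω : ℂ) : ℂ :=
  ∏' n : ℕ, (p + (1 - p) * Complex.exp (ω / 2 ^ (n + 1)))

open Complex

lemma Complex.summable_exp_sub_one {ι : Type*} {w : ι → ℂ} (hw : Summable w) :
    Summable fun i => cexp (w i) - 1 := by
  refine (hw.norm.mul_left 2).of_norm_bounded_eventually ?_
  filter_upwards [hw.norm.tendsto_cofinite_zero.eventually_le_const one_pos] with i hi
    using norm_exp_sub_one_le hi

lemma Complex.summable_div_two_pow_succ (z : ℂ) : Summable fun n : ℕ => z / 2 ^ (n + 1) := by
  have hgeom : Summable fun n : ℕ => (2⁻¹ : ℂ) ^ n :=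
    summable_geometric_of_norm_lt_one (by norm_num)
  refine (hgeom.mul_left (z / 2)).congr fun n => ?_
  rw [pow_succ, inv_pow]
  field_simp

lemma multipliable_Iprod (p ω : ℂ) :
    Multipliable fun n : ℕ => p + (1 - p) * cexp (ω / 2 ^ (n + 1)) := by
  have hsum := (summable_exp_sub_one (summable_div_two_pow_succ ω)).mul_left (1 - p)
  convert Complex.multipliable_one_add_of_summable hsum using 2
  ring

lemma affine_mul_affine_eq_affine_sq (p x : ℂ) (hp : 2 * p - 1 ≠ 0) :
    (p + (1 - p) * x) * (p / (2 * p - 1) + (1 - p / (2 * p - 1)) * x) =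
      p ^ 2 / (2 * p - 1) + (1 - p ^ 2 / (2 * p - 1)) * x ^ 2 := by
  simp only [div_eq_mul_inv]
  linear_combination p * (x ^ 2 - x) * mul_inv_cancel₀ hp

lemma exp_div_two_div_two_pow_sq (ω : ℂ) (n : ℕ) :
    cexp (ω / 2 / 2 ^ (n + 1)) ^ 2 = cexp (ω / 2 ^ (n + 1)) := by
  rw [← exp_nat_mul]
  congr 1
  push_cast
  field_simp

/-- For every `p ∈ ℂ` with `p ≠ 1/2` and every `ω ∈ ℂ`,
`I_p(ω/2) · I_{p/(2p-1)}(ω/2) = I_{p²/(2p-1)}(ω)`. -/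
theorem stmt12 (p : ℂ) (hp : p ≠ 1 / 2) (ω : ℂ) :
    Iprod p (ω / 2) * Iprod (p / (2 * p - 1)) (ω / 2) = Iprod (p ^ 2 / (2 * p - 1)) ω := by
  have h2p : 2 * p - 1 ≠ 0 := fun h => hp (by linear_combination h / 2)
  unfold Iprod
  rw [← (multipliable_Iprod p _).tprod_mul (multipliable_Iprod _ _)]
  refine tprod_congr fun n => ?_
  rw [affine_mul_affine_eq_affine_sq p _ h2p, exp_div_two_div_two_pow_sq]
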